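/- Let α ∈ ℝ \ ℚ and let g be a germ of a holomorphic function with g(0) = 0 that commutes with Q_α on a neighbourhood of 0 and satisfies g'(0) = e^{2πikα} for some k ∈ ℤ. Then g equals the iterate Q_α^∘k near 0; precisely, there exist m, n ∈ ℕ with (n : ℤ) − (m : ℤ) = k such that Q_α^∘m ∘ g = Q_α^∘n on a neighbourhood of 0. -/

import Mathlib

open Filter Topology

/-- The quadratic map `Q_α(z) = e^{2πiα} z + z²`. -/
noncomputable def Q (α : ℝ) : ℂ → ℂ :=
  fun z => Complex.exp (2 * Real.pi * α * Complex.I) * z + z ^ 2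

/-!
Write `λ = e^{2πiα}` and `m, n` for the negative and positive parts of `k`. The germs
`Q_α^∘m ∘ g` and `Q_α^∘n` both fix `0`, commute with `Q_α` and have derivative `λ^n` at `0`.
Two such germs `f₁, f₂` must agree: from `Q(a) - Q(b) = (a - b)(λ + a + b)` the difference
`F = f₁ - f₂` satisfies `F ∘ Q = F · (λ + f₁ + f₂)`. If `F` vanishes to exact order `d`,
comparing the coefficients of `z^d` on both sides gives `λ^d = λ`, while `F(0) = F'(0) = 0`
forces `d ≥ 2`; this is impossible since `λ` is not a root of unity when `α` is irrational.
-/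

section QuadraticGerms

variable {c : ℂ}

theorem tendsto_quadratic_nhds_zero :
    Tendsto (fun z : ℂ => c * z + z ^ 2) (𝓝 0) (𝓝 0) := by
  have hcont : Continuous (fun z : ℂ => c * z + z ^ 2) := by fun_prop
  simpa using hcont.tendsto 0

/-- The leading coefficients of `F ∘ (c z + z²)` and of `F · u` at `0` are `c^d F_d` and
`u(0) F_d`. -/
theorem pow_analyticOrderAt_eq_of_comp_quadratic {F u : ℂ → ℂ} {d : ℕ}
    (hF : AnalyticAt ℂ F 0) (hd : analyticOrderAt F 0 = d) (hu : ContinuousAt u 0)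
    (hFu : ∀ᶠ z in 𝓝 0, F (c * z + z ^ 2) = F z * u z) : c ^ d = u 0 := by
  obtain ⟨h, hh, hh0, hFh⟩ := hF.analyticOrderAt_eq_natCast.mp hd
  simp only [sub_zero, smul_eq_mul] at hFh
  have hFh_comp := tendsto_quadratic_nhds_zero (c := c) |>.eventually hFh
  have hcancel : (fun z => h z * u z) =ᶠ[𝓝[≠] 0] fun z => (c + z) ^ d * h (c * z + z ^ 2) := by
    filter_upwards [nhdsWithin_le_nhds (hFu.and (hFh.and hFh_comp)),
      self_mem_nhdsWithin] with z ⟨hz, hFz, hFQz⟩ hz0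
    refine mul_left_cancel₀ (pow_ne_zero d hz0) ?_
    calc z ^ d * (h z * u z) = F z * u z := by rw [hFz]; ring
      _ = (c * z + z ^ 2) ^ d * h (c * z + z ^ 2) := by rw [← hz, hFQz]
      _ = z ^ d * ((c + z) ^ d * h (c * z + z ^ 2)) := by
        rw [show c * z + z ^ 2 = z * (c + z) by ring, mul_pow, mul_assoc]
  have hlhs : ContinuousAt (fun z => (c + z) ^ d * h (c * z + z ^ 2)) 0 :=
    (continuousAt_const.add continuousAt_id).pow d |>.mul <|
      hh.continuousAt.comp_of_eq (by fun_prop) (by simp)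
  have hlim := tendsto_nhds_unique hlhs.continuousWithinAt.tendsto
    ((hh.continuousAt.mul hu).continuousWithinAt.tendsto.congr' hcancel)
  simp only [add_zero, mul_zero, zero_pow two_ne_zero] at hlim
  exact mul_right_cancel₀ hh0 (hlim.trans (mul_comm _ _))

theorem eventuallyEq_of_commute_quadratic (hc0 : c ≠ 0) (hc : ¬ IsOfFinOrder c) {f₁ f₂ : ℂ → ℂ}
    (h₁ : AnalyticAt ℂ f₁ 0) (h₂ : AnalyticAt ℂ f₂ 0) (h₁0 : f₁ 0 = 0) (h₂0 : f₂ 0 = 0)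
    (hd : deriv f₁ 0 = deriv f₂ 0)
    (hc₁ : ∀ᶠ z in 𝓝 0, f₁ (c * z + z ^ 2) = c * f₁ z + f₁ z ^ 2)
    (hc₂ : ∀ᶠ z in 𝓝 0, f₂ (c * z + z ^ 2) = c * f₂ z + f₂ z ^ 2) :
    f₁ =ᶠ[𝓝 0] f₂ := by
  set F : ℂ → ℂ := fun z => f₁ z - f₂ z
  have hF : AnalyticAt ℂ F 0 := h₁.sub h₂
  by_contra hne
  have htop : analyticOrderAt F 0 ≠ ⊤ := fun htop =>
    hne ((analyticOrderAt_eq_top.mp htop).mono fun z hz => sub_eq_zero.mp hz)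
  obtain ⟨d, hdF⟩ := ENat.ne_top_iff_exists.mp htop
  have htwo : 2 ≤ d := by
    have h2 : ((2 : ℕ) : ℕ∞) ≤ analyticOrderAt F 0 := by
      refine (natCast_le_analyticOrderAt_iff_iteratedDeriv_eq_zero hF).mpr fun i hi => ?_
      interval_cases i
      · simp [F, h₁0, h₂0]
      · simp [F, deriv_fun_sub h₁.differentiableAt h₂.differentiableAt, hd]
    exact_mod_cast hdF ▸ h2
  have hFcomp : ∀ᶠ z in 𝓝 0, F (c * z + z ^ 2) = F z * (c + f₁ z + f₂ z) := by
    filter_upwards [hc₁, hc₂] with z hz₁ hz₂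
    simp only [F, hz₁, hz₂]
    ring
  have hpow : c ^ (d - 1) * c = 1 * c := by
    rw [← pow_succ, Nat.sub_add_cancel (by omega), one_mul,
      pow_analyticOrderAt_eq_of_comp_quadratic hF hdF.symm (by fun_prop) hFcomp]
    simp [h₁0, h₂0]
  exact hc (isOfFinOrder_iff_pow_eq_one.mpr ⟨d - 1, by omega, mul_right_cancel₀ hc0 hpow⟩)

end QuadraticGerms

theorem not_isOfFinOrder_exp_two_pi_mul_I {α : ℝ} (hα : Irrational α) :
    ¬ IsOfFinOrder (Complex.exp (2 * Real.pi * α * Complex.I)) := by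
  intro hfin
  obtain ⟨j, hj, hpow⟩ := isOfFinOrder_iff_pow_eq_one.mp hfin
  rw [← Complex.exp_nat_mul, Complex.exp_eq_one_iff] at hpow
  obtain ⟨n, hn⟩ := hpow
  have hjα : ((j * α : ℝ) : ℂ) = n := by
    refine mul_right_cancel₀ (by simp [Real.pi_ne_zero] : 2 * (Real.pi : ℂ) * Complex.I ≠ 0) ?_
    push_cast
    linear_combination hn
  exact (hα.natCast_mul hj.ne').ne_int n (by exact_mod_cast hjα)

theorem Q_zero (α : ℝ) : Q α 0 = 0 := by simp [Q]

theorem differentiable_Q (α : ℝ) : Differentiable ℂ (Q α) := by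
  unfold Q
  fun_prop

theorem hasDerivAt_Q_zero (α : ℝ) :
    HasDerivAt (Q α) (Complex.exp (2 * Real.pi * α * Complex.I)) 0 := by
  unfold Q
  simpa using ((hasDerivAt_id (0 : ℂ)).const_mul
    (Complex.exp (2 * Real.pi * α * Complex.I))).fun_add (hasDerivAt_pow 2 (0 : ℂ))

theorem exp_two_pi_mul_I_pow_mul_exp_intCast_mul (α : ℝ) {m n : ℕ} {k : ℤ}
    (hk : (n : ℤ) - m = k) :
    Complex.exp (2 * Real.pi * α * Complex.I) ^ m
        * Complex.exp (2 * Real.pi * ((k : ℝ) * α) * Complex.I)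
      = Complex.exp (2 * Real.pi * α * Complex.I) ^ n := by
  have hexp : Complex.exp (2 * Real.pi * ((k : ℝ) * α) * Complex.I)
      = Complex.exp (2 * Real.pi * α * Complex.I) ^ k := by
    rw [← Complex.exp_int_mul]
    push_cast
    ring_nf
  rw [hexp, ← zpow_natCast, ← zpow_natCast, ← zpow_add₀ (Complex.exp_ne_zero _), ← hk]
  ring_nf

/-- For irrational `α`, a germ `g` with `g(0) = 0`, commuting with `Q_α` near `0` and
with `g'(0) = e^{2πikα}` for some `k ∈ ℤ`, equals the iterate `Q_α^∘k` near `0`: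
there are `m, n ∈ ℕ` with `n − m = k` and `Q_α^∘m ∘ g = Q_α^∘n` near `0`. -/
theorem germ_with_multiplier_is_iterate (α : ℝ) (hα : Irrational α)
    (g : ℂ → ℂ) (hg : AnalyticAt ℂ g 0) (hg0 : g 0 = 0) (k : ℤ)
    (hg' : deriv g 0 = Complex.exp (2 * Real.pi * ((k : ℝ) * α) * Complex.I))
    (hcomm : ∀ᶠ z in 𝓝 (0 : ℂ), g (Q α z) = Q α (g z)) :
    ∃ m n : ℕ, (n : ℤ) - (m : ℤ) = k ∧
      ∀ᶠ z in 𝓝 (0 : ℂ), (Q α)^[m] (g z) = (Q α)^[n] z := by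
  have hmn : (k.toNat : ℤ) - ((-k).toNat : ℤ) = k := by omega
  refine ⟨(-k).toNat, k.toNat, hmn, ?_⟩
  set m := (-k).toNat
  set n := k.toNat
  have hQm := (hasDerivAt_Q_zero α).iterate 0 (Q_zero α) m
  rw [← hg0] at hQm
  have hQn := (hasDerivAt_Q_zero α).iterate 0 (Q_zero α) n
  have hderiv : deriv ((Q α)^[m] ∘ g) 0 = deriv (Q α)^[n] 0 := by
    rw [hQm.comp (0 : ℂ) hg.differentiableAt.hasDerivAt |>.deriv, hQn.deriv, hg',
      exp_two_pi_mul_I_pow_mul_exp_intCast_mul α hmn]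
  refine eventuallyEq_of_commute_quadratic (Complex.exp_ne_zero _)
    (not_isOfFinOrder_exp_two_pi_mul_I hα)
    (((differentiable_Q α).iterate m).analyticAt _ |>.comp_of_eq hg rfl)
    (((differentiable_Q α).iterate n).analyticAt _)
    (by simp [hg0, Function.iterate_fixed (Q_zero α)]) (Function.iterate_fixed (Q_zero α) n)
    hderiv ?_ (.of_forall fun z => ((Function.Commute.self_iterate (Q α) n).eq z).symm)
  filter_upwards [hcomm] with z hz
  exact (congrArg _ hz).trans ((Function.Commute.self_iterate (Q α) m).eq (g z)).symm
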